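/- arXiv:math/0702350 — 3 statements merged into one kernel-verified Lean document; each statement's English description precedes it below -/
import Mathlib

section
/- Every tournament on at least 2^n vertices contains a transitive subtournament on at least n vertices. -/
/-!
Pick a vertex `v` of a tournament on `2^(n+1)` vertices. The other vertices split into those
`v` beats and those that beat `v`, so one of the two classes has at least `2^n` vertices. By
induction it contains a transitive subtournament on `n` vertices, and adding `v` on top (resp.
at the bottom) keeps it transitive.
-/

open Finset

section

variable {V : Type*} {r : V → V → Prop}

def IsTournament (r : V → V → Prop) : Prop :=
  ∀ x y, x ≠ y → Xor (r x y) (r y x)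

def TransitiveOn (r : V → V → Prop) (S : Finset V) : Prop :=
  ∀ x ∈ S, ∀ y ∈ S, ∀ z ∈ S, r x y → r y z → r x z

theorem IsTournament.swap (hr : IsTournament r) : IsTournament (Function.swap r) :=
  fun x y hxy => (xor_comm _ _).mp (hr x y hxy)

theorem transitiveOn_swap {S : Finset V} : TransitiveOn (Function.swap r) S ↔ TransitiveOn r S :=
  ⟨fun h x hx y hy z hz hxy hyz => h z hz y hy x hx hyz hxy,
    fun h x hx y hy z hz hxy hyz => h z hz y hy x hx hyz hxy⟩

theorem TransitiveOn.insert [DecidableEq V] {S : Finset V} {v : V} (hS : TransitiveOn r S)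
    (hv : ∀ y ∈ S, r v y ∧ ¬ r y v) : TransitiveOn r (insert v S) := by
  intro x hx y hy z hz hxy hyz
  rcases mem_insert.mp hz with hzv | hz
  · subst z
    rcases mem_insert.mp hy with hyv | hy
    · subst y
      exact hxy
    · exact absurd hyz (hv y hy).2
  · rcases mem_insert.mp hx with hxv | hx
    · subst x
      exact (hv z hz).1
    · rcases mem_insert.mp hy with hyv | hy
      · subst y
        exact absurd hxy (hv x hx).2
      · exact hS x hx y hy z hz hxy hyz

theorem IsTournament.card_erase_eq_card_out_add_card_in [DecidableEq V] [DecidableRel r]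
    (hr : IsTournament r) {A : Finset V} {v : V} (hv : v ∈ A) :
    #(A.erase v) = #{y ∈ A | r v y ∧ ¬ r y v} + #{y ∈ A | r y v ∧ ¬ r v y} := by
  rw [← card_union_of_disjoint (disjoint_filter.2 fun _ _ hout hin => hout.2 hin.1), ← filter_or]
  congr 1
  ext y
  simp only [mem_erase, mem_filter]
  constructor
  · rintro ⟨hyv, hy⟩
    exact ⟨hy, hr v y (Ne.symm hyv)⟩
  · rintro ⟨hy, hxor⟩
    refine ⟨?_, hy⟩
    rintro rfl
    exact (xor_self _).mp hxor

theorem IsTournament.exists_transitiveOn_subset (hr : IsTournament r) (n : ℕ) (A : Finset V)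
    (hA : 2 ^ n ≤ #A) : ∃ S ⊆ A, n ≤ #S ∧ TransitiveOn r S := by
  classical
  induction n generalizing r A with
  | zero => exact ⟨∅, empty_subset _, le_rfl, by simp [TransitiveOn]⟩
  | succ n ih =>
    obtain ⟨v, hv⟩ : A.Nonempty := card_pos.mp (lt_of_lt_of_le (by positivity) hA)
    wlog hout : 2 ^ n ≤ #{y ∈ A | r v y ∧ ¬ r y v} generalizing r
    -- Otherwise the vertices beating `v` are many, and they are beaten by `v` in the reversed tournament.
    · have hsplit := hr.card_erase_eq_card_out_add_card_in hv
      rw [card_erase_of_mem hv] at hsplit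
      have hin : 2 ^ n ≤ #{y ∈ A | Function.swap r v y ∧ ¬ Function.swap r y v} := by
        simp only [Function.swap]
        rw [pow_succ] at hA
        omega
      obtain ⟨S, hSA, hS, hSt⟩ := this hr.swap hin
      exact ⟨S, hSA, hS, transitiveOn_swap.mp hSt⟩
    obtain ⟨S, hSB, hS, hSt⟩ := ih hr _ hout
    have hdom : ∀ y ∈ S, r v y ∧ ¬ r y v := fun y hy => (mem_filter.mp (hSB hy)).2
    have hvS : v ∉ S := fun h => (hdom v h).2 (hdom v h).1
    refine ⟨insert v S, insert_subset hv (hSB.trans (filter_subset _ _)), ?_, hSt.insert hdom⟩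
    rw [card_insert_of_notMem hvS]
    omega

end

theorem tournament_transitive_subtournament_general {V : Type*} [Fintype V]
    (r : V → V → Prop)
    (htot : ∀ x y : V, x ≠ y → Xor' (r x y) (r y x))
    (n : ℕ) (hcard : 2 ^ n ≤ Fintype.card V) :
    ∃ S : Finset V, n ≤ S.card ∧
      ∀ x ∈ S, ∀ y ∈ S, ∀ z ∈ S, r x y → r y z → r x z := by
  obtain ⟨S, -, hS, hSt⟩ := IsTournament.exists_transitiveOn_subset htot n univ hcard
  exact ⟨S, hS, hSt⟩

/-- Every tournament on at least `2^n` vertices contains a transitive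
subtournament on at least `n` vertices. -/
theorem tournament_transitive_subtournament {V : Type*} [Fintype V]
    (r : V → V → Prop) (hirr : ∀ x, ¬ r x x)
    (htot : ∀ x y : V, x ≠ y → Xor' (r x y) (r y x))
    (n : ℕ) (hcard : 2 ^ n ≤ Fintype.card V) :
    ∃ S : Finset V, n ≤ S.card ∧
      ∀ x ∈ S, ∀ y ∈ S, ∀ z ∈ S, r x y → r y z → r x z :=
  tournament_transitive_subtournament_general r htot n hcard
end

section
/- For k ≥ 4, the tournament G_1^{(k)} on vertex set {1,...,2k+1}, with i → j whenever 1 ≤ i < j ≤ 2k, and i → 2k+1 iff i ≥ k+1 (and 2k+1 → i iff i ≤ k), has at least k−2 pairwise non-isomorphic induced subtournaments on k vertices. -/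
/-!
For `0 ≤ s ≤ k - 3` pick the `s` lowest vertices, the top `t = k - 1 - s` vertices of
`{k, …, 2k - 1}` and the vertex `2k`. The induced subtournament is a transitive tournament on
`s + t` vertices plus an apex beating the first `s` and beaten by the last `t`. The apex lies on
`s * t` cyclic triangles, a low vertex on `t` and a high vertex on `s`. An isomorphism between
the models for `(s, t)` and `(s', t')`, where `s + t = s' + t'` and `t, t' ≥ 2`, preserves these
counts and out-degrees. Since `s * t` equals neither `t'` nor `s'` unless `s = s'`, it sends the
apex to the apex, whose out-degrees are `s` and `s'`.
-/

/-- The tournament `G₁⁽ᵏ⁾` on `2k+1` vertices (`0`-based): `a → b` whenever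
`a < b ≤ 2k-1`, `a → 2k` iff `a ≥ k`, and `2k → a` iff `a < k`. -/
def G1 (k : ℕ) (a b : Fin (2 * k + 1)) : Prop :=
  if (b : ℕ) = 2 * k then k ≤ (a : ℕ) ∧ (a : ℕ) < 2 * k
  else if (a : ℕ) = 2 * k then (b : ℕ) < k
  else (a : ℕ) < (b : ℕ)

section Invariants

variable {α β : Type*} {r : α → α → Prop} {s : β → β → Prop}

noncomputable def outDegree (r : α → α → Prop) (a : α) : ℕ :=
  Nat.card {b // r a b}

noncomputable def cyclicTriangleCount (r : α → α → Prop) (a : α) : ℕ :=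
  Nat.card {p : α × α // r a p.1 ∧ r p.1 p.2 ∧ r p.2 a}

theorem RelIso.outDegree_apply (f : r ≃r s) (a : α) : outDegree s (f a) = outDegree r a :=
  Nat.card_congr (f.toEquiv.subtypeEquiv fun _ => f.map_rel_iff.symm).symm

theorem RelIso.cyclicTriangleCount_apply (f : r ≃r s) (a : α) :
    cyclicTriangleCount s (f a) = cyclicTriangleCount r a :=
  Nat.card_congr ((f.toEquiv.prodCongr f.toEquiv).subtypeEquiv fun _ =>
    (and_congr f.map_rel_iff (and_congr f.map_rel_iff f.map_rel_iff)).symm).symm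

end Invariants

namespace Fin

variable {n a b c d : ℕ}

theorem natCard_subtype_of_iff_Ico {P : Fin n → Prop} (hb : b ≤ n)
    (hP : ∀ v, P v ↔ a ≤ (v : ℕ) ∧ (v : ℕ) < b) : Nat.card (Subtype P) = b - a := by
  let e : Subtype P ≃ Finset.Ico a b :=
    { toFun := fun v => ⟨v.1, Finset.mem_Ico.2 ((hP _).1 v.2)⟩
      invFun := fun m => ⟨⟨m, by have := Finset.mem_Ico.1 m.2; omega⟩,
        (hP _).2 (Finset.mem_Ico.1 m.2)⟩
      left_inv := fun _ => rfl
      right_inv := fun _ => rfl }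
  rw [Nat.card_congr e, Nat.card_eq_fintype_card, Fintype.card_coe, Nat.card_Ico]

theorem natCard_subtype_prod_of_iff_Ico {P : Fin n × Fin n → Prop} (hb : b ≤ n) (hd : d ≤ n)
    (hP : ∀ p, P p ↔ (a ≤ (p.1 : ℕ) ∧ (p.1 : ℕ) < b) ∧ (c ≤ (p.2 : ℕ) ∧ (p.2 : ℕ) < d)) :
    Nat.card (Subtype P) = (b - a) * (d - c) := by
  rw [Nat.card_congr ((Equiv.subtypeEquivRight hP).trans (Equiv.subtypeProdEquivProd
      (p := fun v : Fin n => a ≤ (v : ℕ) ∧ (v : ℕ) < b)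
      (q := fun v : Fin n => c ≤ (v : ℕ) ∧ (v : ℕ) < d))),
    Nat.card_prod, natCard_subtype_of_iff_Ico hb fun _ => Iff.rfl,
    natCard_subtype_of_iff_Ico hd fun _ => Iff.rfl]

end Fin

/-- The transitive tournament `0 → 1 → ⋯ → s + t - 1` together with an apex `s + t` that beats
the first `s` vertices and is beaten by the last `t`. -/
def apexTournament (s t : ℕ) (a b : Fin (s + t + 1)) : Prop :=
  if (b : ℕ) = s + t then s ≤ (a : ℕ) ∧ (a : ℕ) < s + t
  else if (a : ℕ) = s + t then (b : ℕ) < s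
  else (a : ℕ) < (b : ℕ)

namespace apexTournament

variable {s t : ℕ}

theorem outDegree_last : outDegree (apexTournament s t) (Fin.last (s + t)) = s := by
  rw [outDegree, Fin.natCard_subtype_of_iff_Ico (a := 0) (b := s) (by omega), Nat.sub_zero]
  intro b
  have := b.2
  simp only [apexTournament, Fin.val_last]
  split_ifs <;> omega

theorem cyclicTriangleCount_eq (v : Fin (s + t + 1)) :
    cyclicTriangleCount (apexTournament s t) v =
      if (v : ℕ) < s then t else if (v : ℕ) < s + t then s else s * t := by
  have := v.2
  split_ifs with h₁ h₂
  -- `v → high → apex → v`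
  on_goal 1 => rw [cyclicTriangleCount, Fin.natCard_subtype_prod_of_iff_Ico (a := s) (b := s + t)
    (c := s + t) (d := s + t + 1) (by omega) le_rfl, Nat.add_sub_cancel_left,
    Nat.add_sub_cancel_left, Nat.mul_one]
  -- `v → apex → low → v`
  on_goal 2 => rw [cyclicTriangleCount, Fin.natCard_subtype_prod_of_iff_Ico (a := s + t)
    (b := s + t + 1) (c := 0) (d := s) le_rfl (by omega), Nat.add_sub_cancel_left,
    Nat.sub_zero, Nat.one_mul]
  -- `apex → low → high → apex`
  on_goal 3 => rw [cyclicTriangleCount, Fin.natCard_subtype_prod_of_iff_Ico (a := 0) (b := s)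
    (c := s) (d := s + t) (by omega) (by omega), Nat.sub_zero, Nat.add_sub_cancel_left]
  all_goals
    intro p
    have := p.1.2; have := p.2.2
    simp only [apexTournament]
    split_ifs <;> omega

theorem eq_of_relIso {s' t' : ℕ} (h : s + t = s' + t') (ht : 2 ≤ t) (ht' : 2 ≤ t')
    (f : apexTournament s t ≃r apexTournament s' t') : s = s' := by
  have hcyc := f.cyclicTriangleCount_apply (Fin.last _)
  rw [cyclicTriangleCount_eq, cyclicTriangleCount_eq] at hcyc
  simp only [Fin.val_last, lt_self_iff_false, if_false, add_lt_iff_neg_left, not_lt_zero] at hcyc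
  have := (f (Fin.last _)).2
  split_ifs at hcyc with h₁ h₂
  · rcases s with _ | _ | s
    · omega
    · omega
    · nlinarith
  · rcases s with _ | s
    · omega
    · nlinarith
  · have hlast : f (Fin.last _) = Fin.last _ := Fin.ext (by simp; omega)
    have hdeg := f.outDegree_apply (Fin.last _)
    rw [hlast, outDegree_last, outDegree_last] at hdeg
    exact hdeg.symm

end apexTournament

/-- The `s` lowest vertices, the top `k - 1 - s` vertices below `2k`, and the vertex `2k`. -/
def G1.inducedSet (k s : ℕ) : Finset (Fin (2 * k + 1)) :=
  {a | (a : ℕ) < s ∨ k + s < (a : ℕ)}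

theorem G1.nonempty_relIso_apexTournament {k s t : ℕ} (h : s + t + 1 = k) :
    Nonempty (apexTournament s t ≃r Subrel (G1 k) (· ∈ G1.inducedSet k s)) := by
  subst h
  let g : Fin (s + t + 1) → {a // a ∈ G1.inducedSet (s + t + 1) s} := fun v =>
    ⟨⟨if (v : ℕ) < s then v else v + (s + t + 1) + 1, by have := v.2; split_ifs <;> omega⟩,
      by
        simp only [G1.inducedSet, Finset.mem_filter, Finset.mem_univ, true_and]
        split_ifs <;> omega⟩
  have hg : Function.Bijective g := by
    constructor
    · intro a b hab
      have := a.2; have := b.2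
      simp only [g, Subtype.mk.injEq, Fin.mk.injEq] at hab
      ext
      split_ifs at hab <;> omega
    · rintro ⟨a, ha⟩
      simp only [G1.inducedSet, Finset.mem_filter, Finset.mem_univ, true_and] at ha
      have := a.2
      refine ⟨⟨if (a : ℕ) < s then a else a - (s + t + 1) - 1, by split_ifs <;> omega⟩, ?_⟩
      simp only [g, Subtype.mk.injEq]
      ext
      split_ifs <;> simp_all <;> omega
  refine ⟨{ toEquiv := Equiv.ofBijective g hg, map_rel_iff' := fun {a b} => ?_ }⟩
  have := a.2; have := b.2
  simp only [Equiv.ofBijective_apply, subrel_val, g, G1, apexTournament]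
  split_ifs <;> omega

theorem G1_many_subtournaments_general (k : ℕ) :
    ∃ f : Fin (k - 2) → Finset (Fin (2 * k + 1)),
      (∀ i, (f i).card = k) ∧
      ∀ i j, i ≠ j →
        ¬ ∃ e : {x // x ∈ f i} ≃ {x // x ∈ f j},
          ∀ x y : {x // x ∈ f i}, G1 k x.1 y.1 ↔ G1 k (e x).1 (e y).1 := by
  have model (i : Fin (k - 2)) :=
    (G1.nonempty_relIso_apexTournament (k := k) (s := i) (t := k - 1 - i)
      (by have := i.2; omega)).some
  refine ⟨fun i => G1.inducedSet k i, fun i => ?_, fun i j hij ⟨e, he⟩ => hij ?_⟩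
  · rw [← Fintype.card_coe, ← Nat.card_eq_fintype_card, ← Nat.card_congr (model i).toEquiv,
      Nat.card_eq_fintype_card, Fintype.card_fin]
    omega
  · let e' : Subrel (G1 k) (· ∈ G1.inducedSet k i) ≃r Subrel (G1 k) (· ∈ G1.inducedSet k j) :=
      ⟨e, (he _ _).symm⟩
    have := i.2; have := j.2
    exact Fin.ext <| apexTournament.eq_of_relIso (t := k - 1 - i) (t' := k - 1 - j)
      (by omega) (by omega) (by omega) ((model i).trans (e'.trans (model j).symm))

/-- For `k ≥ 4`, the tournament `G₁⁽ᵏ⁾` has at least `k-2` pairwise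
non-isomorphic induced subtournaments on `k` vertices. -/
theorem G1_many_subtournaments (k : ℕ) (hk : 4 ≤ k) :
    ∃ f : Fin (k - 2) → Finset (Fin (2 * k + 1)),
      (∀ i, (f i).card = k) ∧
      ∀ i j, i ≠ j →
        ¬ ∃ e : {x // x ∈ f i} ≃ {x // x ∈ f j},
          ∀ x y : {x // x ∈ f i}, G1 k x.1 y.1 ↔ G1 k (e x).1 (e y).1 :=
  G1_many_subtournaments_general k
end

section
/- If G is a graph on n vertices in which every vertex has degree at most L or at least n − L, and X = {v : deg(v) ≤ L}, Y = V(G) \ X, then min(|X|, |Y|) ≤ 2L. -/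
open Finset in
/-- If every vertex of a graph on `n` vertices has degree at most `L` or at
least `n - L`, and `X` is the set of low-degree vertices, `Y` its complement,
then `min(|X|,|Y|) ≤ 2L`. -/
theorem min_low_high_le (n L : ℕ) (G : SimpleGraph (Fin n))
    [DecidableRel G.Adj]
    (h : ∀ v, G.degree v ≤ L ∨ n - L ≤ G.degree v) :
    min (Finset.univ.filter (fun v => G.degree v ≤ L)).card
        (Finset.univ.filter (fun v => ¬ G.degree v ≤ L)).card ≤ 2 * L := by
  by_contra hmin
  replace hmin := Nat.lt_of_not_le hmin
  set X := Finset.univ.filter (fun v => G.degree v ≤ L) with hX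
  set Y := Finset.univ.filter (fun v => ¬ G.degree v ≤ L) with hY
  have hXc : 2 * L < X.card := lt_of_lt_of_le hmin (min_le_left _ _)
  have hYc : 2 * L < Y.card := lt_of_lt_of_le hmin (min_le_right _ _)
  -- double counting of edges between X and Y
  have hE : ∑ y ∈ Y, (X.filter (fun x => G.Adj y x)).card
          = ∑ x ∈ X, (Y.filter (fun y => G.Adj x y)).card := by
    simp only [Finset.card_filter]
    rw [Finset.sum_comm]
    refine Finset.sum_congr rfl fun x _ => Finset.sum_congr rfl fun y _ => ?_
    simp [SimpleGraph.adj_comm]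
  -- upper bound
  have hub : ∑ x ∈ X, (Y.filter (fun y => G.Adj x y)).card ≤ X.card * L := by
    have := Finset.sum_le_card_nsmul X (fun x => (Y.filter (fun y => G.Adj x y)).card) L ?_
    · simpa using this
    intro x hx
    have hxd : G.degree x ≤ L := by
      rw [hX] at hx; simpa using hx
    calc (Y.filter (fun y => G.Adj x y)).card
        ≤ (Finset.univ.filter (fun y => G.Adj x y)).card :=
          Finset.card_le_card (Finset.filter_subset_filter _ (Finset.subset_univ _))
      _ = G.degree x := by rw [SimpleGraph.degree, SimpleGraph.neighborFinset_eq_filter]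
      _ ≤ L := hxd
  -- lower bound
  have hlb : Y.card * (X.card - L) ≤ ∑ y ∈ Y, (X.filter (fun x => G.Adj y x)).card := by
    have := Finset.card_nsmul_le_sum Y (fun y => (X.filter (fun x => G.Adj y x)).card) (X.card - L) ?_
    · simpa using this
    intro y hy
    have hyd : ¬ G.degree y ≤ L := by
      rw [hY] at hy; simpa using hy
    have hdeg : n - L ≤ G.degree y := (h y).resolve_left hyd
    have hsplit : (X.filter (fun x => G.Adj y x)).card
        + (X.filter (fun x => ¬ G.Adj y x)).card = X.card :=
      Finset.card_filter_add_card_filter_not _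
    have hneg : (Finset.univ.filter (fun x => G.Adj y x)).card
        + (Finset.univ.filter (fun x => ¬ G.Adj y x)).card = n := by
      rw [Finset.card_filter_add_card_filter_not]
      simp
    have hdu : (Finset.univ.filter (fun x => G.Adj y x)).card = G.degree y := by
      rw [SimpleGraph.degree, SimpleGraph.neighborFinset_eq_filter]
    have hle : (X.filter (fun x => ¬ G.Adj y x)).card
        ≤ (Finset.univ.filter (fun x => ¬ G.Adj y x)).card :=
      Finset.card_le_card (Finset.filter_subset_filter _ (Finset.subset_univ _))
    omega
  have key : Y.card * (X.card - L) ≤ X.card * L := by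
    calc Y.card * (X.card - L) ≤ _ := hlb
      _ = _ := hE
      _ ≤ X.card * L := hub
  obtain ⟨c, hc⟩ : ∃ c, X.card = c + L := ⟨X.card - L, by omega⟩
  have hc2 : L + 1 ≤ c := by omega
  rw [hc, Nat.add_sub_cancel] at key
  nlinarith [key, hc2, hYc]
end
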